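/- Let G be a cyclic group that is either infinite or of even order greater than 2, and let M₀ be a Shultenian partial linear space with no 2-element lines, in which any two collinear points can be completed to a triangle, and any two intersecting lines can be completed by a third line to a triangle of lines. Then for every point p and every line l of ⊛_G(∘, M₀): p ⊹₁ l if and only if p ⊹ l. -/

import Mathlib

/-- A partial linear space: every line has at least two points, every point is on
at least two lines, and two distinct points are on at most one common line. -/
def IsPLS {P L : Type*} (inc : P → L → Prop) : Prop :=
  (∀ l, ∃ a b, a ≠ b ∧ inc a l ∧ inc b l) ∧
  (∀ a, ∃ l m, l ≠ m ∧ inc a l ∧ inc a m) ∧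
  (∀ a b l m, inc a l → inc b l → inc a m → inc b m → a = b ∨ l = m)

/-- An isomorphism of incidence structures. -/
structure IncIso {P₁ L₁ P₂ L₂ : Type*} (inc₁ : P₁ → L₁ → Prop) (inc₂ : P₂ → L₂ → Prop) where
  pt : P₁ ≃ P₂
  ln : L₁ ≃ L₂
  pres : ∀ a l, inc₁ a l ↔ inc₂ (pt a) (ln l)

/-- A correlation of one incidence structure onto another: a pair of bijections,
points to lines and lines to points, reversing incidence. -/
structure Correlation {P₀ L₀ P₁ L₁ : Type*} (inc₀ : P₀ → L₀ → Prop) (inc₁ : P₁ → L₁ → Prop) where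
  toLines : P₀ ≃ L₁
  toPoints : L₀ ≃ P₁
  rev : ∀ a l, inc₀ a l ↔ inc₁ (toPoints l) (toLines a)

/-- A closed substructure. -/
def IsClosedSub {P L : Type*} (inc : P → L → Prop) (B' : Set P) (B'' : Set L) : Prop :=
  (∀ a₁ a₂ l, a₁ ∈ B' → a₂ ∈ B' → a₁ ≠ a₂ → inc a₁ l → inc a₂ l → l ∈ B'') ∧
  (∀ l₁ l₂ a, l₁ ∈ B'' → l₂ ∈ B'' → l₁ ≠ l₂ → inc a l₁ → inc a l₂ → a ∈ B')

/-- One incidence step (within a substructure) between elements (points or lines). -/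
def IncStep {P L : Type*} (inc : P → L → Prop) (B' : Set P) (B'' : Set L) :
    (P ⊕ L) → (P ⊕ L) → Prop :=
  fun x y => ∃ a l, a ∈ B' ∧ l ∈ B'' ∧ inc a l ∧
    ((x = Sum.inl a ∧ y = Sum.inr l) ∨ (x = Sum.inr l ∧ y = Sum.inl a))

/-- Connectivity of a substructure: any two of its elements are joined by a finite
chain of incidences within it. -/
def SubConnected {P L : Type*} (inc : P → L → Prop) (B' : Set P) (B'' : Set L) : Prop :=
  ∀ x y : P ⊕ L, Sum.elim (· ∈ B') (· ∈ B'') x → Sum.elim (· ∈ B') (· ∈ B'') y →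
    Relation.ReflTransGen (IncStep inc B' B'') x y

/-- Connectivity of the whole incidence structure. -/
def ConnectedPLS {P L : Type*} (inc : P → L → Prop) : Prop :=
  SubConnected inc Set.univ Set.univ

/-- Collinearity of two points. -/
def Collin {P L : Type*} (inc : P → L → Prop) (a b : P) : Prop := ∃ l, inc a l ∧ inc b l

/-- A triangle: three pairwise collinear points which are not on a common line. -/
def IsTriangle {P L : Type*} (inc : P → L → Prop) (a b c : P) : Prop :=
  a ≠ b ∧ b ≠ c ∧ a ≠ c ∧ Collin inc a b ∧ Collin inc b c ∧ Collin inc a c ∧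
    ¬ ∃ l, inc a l ∧ inc b l ∧ inc c l

/-- The Shult axiom (Γ-space). -/
def Shultenian {P L : Type*} (inc : P → L → Prop) : Prop :=
  ∀ a b c d l, IsTriangle inc a b c → inc a l → inc b l → inc d l → Collin inc d c

/-- Degree of a point: the number of lines through it. -/
noncomputable def ptDeg {P L : Type*} (inc : P → L → Prop) (p : P) : ℕ :=
  Set.ncard {l | inc p l}

/-- Size of a line: the number of points on it. -/
noncomputable def lnSize {P L : Type*} (inc : P → L → Prop) (l : L) : ℕ :=
  Set.ncard {p | inc p l}

/-- `G` is a cyclic group (with distinguished generator `1`) which is either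
infinite or of even order greater than `2`. -/
def GoodGroup (G : Type*) [CommRing G] : Prop :=
  Nonempty (G ≃+* ℤ) ∨ ∃ k : ℕ, 2 < k ∧ Even k ∧ Nonempty (G ≃+* ZMod k)

/-- `I` is (as a cyclic group with generator `1`) either `ℤ` or `C_k`. -/
def CyclicIndex (I : Type*) [CommRing I] : Prop :=
  Nonempty (I ≃+* ℤ) ∨ ∃ k : ℕ, 0 < k ∧ Nonempty (I ≃+* ZMod k)

/-- Incidence on the disjoint union `S ⊕ L`, in either direction. -/
def dualInc {S L : Type*} (inc0 : S → L → Prop) : (S ⊕ L) → (S ⊕ L) → Prop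
  | Sum.inl a, Sum.inr b => inc0 a b
  | Sum.inr b, Sum.inl a => inc0 a b
  | _, _ => False

/-- Points of the multiplied structure `⊛_G(∘, M₀)`. -/
def starPt (G : Type*) [CommRing G] (S L : Type*) : Set (G × (S ⊕ L)) :=
  {p | (Even p.1 ∧ ∃ a : S, p.2 = Sum.inl a) ∨ (¬ Even p.1 ∧ ∃ l : L, p.2 = Sum.inr l)}

/-- Lines of the multiplied structure `⊛_G(∘, M₀)`. -/
def starLn (G : Type*) [CommRing G] (S L : Type*) : Set (G × (S ⊕ L)) :=
  {q | (Even q.1 ∧ ∃ l : L, q.2 = Sum.inr l) ∨ (¬ Even q.1 ∧ ∃ a : S, q.2 = Sum.inl a)}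

/-- Incidence of the multiplied structure `⊛_G(∘, M₀)`:
`(i,a) I [j,b]` iff (`i = j` and `a I₀ b` or `b I₀ a`) or (`i = j + 1` and `a = b`). -/
def starInc (G : Type*) [CommRing G] {S L : Type*} (inc0 : S → L → Prop) :
    ↥(starPt G S L) → ↥(starLn G S L) → Prop :=
  fun p l => (p.val.1 = l.val.1 ∧ dualInc inc0 p.val.2 l.val.2) ∨
    (p.val.1 = l.val.1 + 1 ∧ p.val.2 = l.val.2)

/-- The relation `⊹` on `⊛_G(∘, M₀)`: `p ⊹ l` iff `p I l` and `i = j + 1`. -/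
def starDod (G : Type*) [CommRing G] {S L : Type*} (inc0 : S → L → Prop)
    (p : ↥(starPt G S L)) (l : ↥(starLn G S L)) : Prop :=
  starInc G inc0 p l ∧ p.val.1 = l.val.1 + 1

/-- The relation `⊹₁`. -/
def dod1 {P L : Type*} (inc : P → L → Prop) (p : P) (l : L) : Prop :=
  inc p l ∧ ∃ q, q ≠ p ∧ inc q l ∧ ∀ k m n, l ≠ k → l ≠ m → l ≠ n → m ≠ n →
    inc q k → inc p m → inc p n → (∃ x, inc x k ∧ inc x m) → ¬ ∃ x, inc x k ∧ inc x n

/-- The relation `◁`: `a ◁ l` iff `a` is not on `l` and there is exactly one line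
through `a` missing `l`. -/
def corrRel {P L : Type*} (inc : P → L → Prop) (a : P) (l : L) : Prop :=
  ¬ inc a l ∧ ∃! m, inc a m ∧ ¬ ∃ x, inc x l ∧ inc x m

/-- The relation `⊹₂`. -/
def dod2 {P L : Type*} (inc : P → L → Prop) (p : P) (l : L) : Prop :=
  inc p l ∧ ∃ a, ¬ Collin inc p a ∧ corrRel inc a l

/-- The family `{B_i}` is a covering of the structure by connected closed
substructures satisfying conditions (1)-(7). -/
def GoodCover {P L I : Type*} (inc : P → L → Prop) (B' : I → Set P) (B'' : I → Set L) : Prop :=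
  (∀ p, ∃ i, p ∈ B' i) ∧ (∀ l, ∃ i, l ∈ B'' i) ∧
  (∀ i, IsClosedSub inc (B' i) (B'' i)) ∧
  (∀ i, SubConnected inc (B' i) (B'' i)) ∧
  (∀ i₁ i₂, (B' i₁ ∩ B' i₂).Nonempty → B' i₁ = B' i₂) ∧
  (∀ i₁ i₂, (B'' i₁ ∩ B'' i₂).Nonempty → B'' i₁ = B'' i₂) ∧
  (∀ i, ∀ d ∈ B' i, ∃ m, inc d m ∧ m ∉ B'' i) ∧
  (∀ i, ∀ m ∈ B'' i, ∃ d, inc d m ∧ d ∉ B' i) ∧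
  (∀ i, IsClosedSub inc (B' i)ᶜ (B'' i)ᶜ) ∧
  (∀ (i : I) (p : P) (m₁ m₂ m₃ : L) (d₁ d₂ d₃ : P),
    inc p m₁ → inc p m₂ → inc p m₃ → inc d₁ m₁ → inc d₂ m₂ → inc d₃ m₃ →
    m₁ ∈ B'' i → m₂ ∈ B'' i → m₃ ∈ B'' i → d₁ ∉ B' i → d₂ ∉ B' i → d₃ ∉ B' i →
    ∃ n, inc d₁ n ∧ inc d₂ n ∧ inc d₃ n) ∧
  (∀ (i : I) (n : L) (d₁ d₂ d₃ : P) (m₁ m₂ m₃ : L),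
    inc d₁ n → inc d₂ n → inc d₃ n → inc d₁ m₁ → inc d₂ m₂ → inc d₃ m₃ →
    d₁ ∈ B' i → d₂ ∈ B' i → d₃ ∈ B' i → m₁ ∉ B'' i → m₂ ∉ B'' i → m₃ ∉ B'' i →
    ∃ q, inc q m₁ ∧ inc q m₂ ∧ inc q m₃)

/-- The relation `ρ` on the index set: `j ρ i` iff `j ≠ i` and some line of `B''_j`
is incident with some point of `B'_i`. -/
def rhoRel {P L I : Type*} (inc : P → L → Prop) (B' : I → Set P) (B'' : I → Set L)
    (j i : I) : Prop :=
  j ≠ i ∧ ∃ l ∈ B'' j, ∃ a ∈ B' i, inc a l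

/-- The relation `⊹` determined by a covering: `a ⊹ m` iff `a I m` and no member of
the covering contains both `a` and `m`. -/
def dodRel {P L I : Type*} (inc : P → L → Prop) (B' : I → Set P) (B'' : I → Set L)
    (a : P) (m : L) : Prop :=
  inc a m ∧ ¬ ∃ i, a ∈ B' i ∧ m ∈ B'' i

/-- Incidence of the structure `⊛_{i∈I}(M_i, φ_i)` obtained by glueing the family
`(M_i)` along the correlations `φ_i`. -/
def glueInc {I : Type*} [CommRing I] {P Lf : I → Type*} (inc : ∀ i, P i → Lf i → Prop)
    (φ : ∀ i, Correlation (inc i) (inc (i + 1))) :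
    (Σ i, P i) → (Σ i, Lf i) → Prop :=
  fun p l => (∃ (i : I) (a : P i) (m : Lf i), p = ⟨i, a⟩ ∧ l = ⟨i, m⟩ ∧ inc i a m) ∨
    (∃ (j : I) (m : Lf j), p = ⟨j + 1, (φ j).toPoints m⟩ ∧ l = ⟨j, m⟩)

/-- The composite `φ_{n-1} ∘ ⋯ ∘ φ_1 ∘ φ_0` acting on the elements of `M₀`. -/
def corrChain {I : Type*} [CommRing I] {P Lf : I → Type*} (inc : ∀ i, P i → Lf i → Prop)
    (φ : ∀ i, Correlation (inc i) (inc (i + 1))) :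
    (n : ℕ) → (P 0 ⊕ Lf 0) → (P (n : I) ⊕ Lf (n : I))
  | 0 => cast (by rw [Nat.cast_zero])
  | n + 1 => fun x =>
      cast (by rw [Nat.cast_add_one])
        (Sum.elim (fun a => Sum.inr ((φ (n : I)).toLines a))
          (fun m => Sum.inl ((φ (n : I)).toPoints m)) (corrChain inc φ n x))

/-- The correlative multiplying `⊛_k(κ₀, M₀)`. -/
def corInc {S L : Type*} (k : ℕ) (inc0 : S → L → Prop) (kap : L → S) :
    ZMod k × S → ZMod k × L → Prop :=
  fun p l => (p.1 = l.1 ∧ inc0 p.2 l.2) ∨ (p.1 = l.1 + 1 ∧ p.2 = kap l.2)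

/-!
Each level of `⊛_G(∘, M₀)` is a copy of `M₀` or of its dual, and a line `[j, b]` carries, besides
its points on level `j`, exactly one point `(j + 1, b)` of the next level, its tip.

If `p` is the tip of `l`, every other line through `p` lies on level `j + 1`, and a line `k`
through a point `q` of `l` on level `j` can meet such a line only in the tip of `k` (the levels
`j - 1, …, j + 2` are distinct because `|G| ≥ 4`). So if `k` met two lines through `p`, then `k`
and `l` would be two elements of `M₀` incident with the same two elements, and `k = l`.

If `p` lies on the level of `l`, then for every other point `q` of `l` the triangle conditions and
Shult's axiom give a line through `q` meeting two lines through `p`: on the level of `l`, or one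
level up when `q` is the tip of `l`. So `p ⊹₁ l` fails.
-/

section IncidenceStructure

variable {S L : Type*} {inc0 : S → L → Prop}

lemma exists_inc_ne_ne
    (hno2 : ∀ l : L, ∃ a b c : S, a ≠ b ∧ a ≠ c ∧ b ≠ c ∧ inc0 a l ∧ inc0 b l ∧ inc0 c l)
    (l : L) (u v : S) : ∃ x, x ≠ u ∧ x ≠ v ∧ inc0 x l := by
  obtain ⟨a, b, c, hab, hac, hbc, ha, hb, hc⟩ := hno2 l
  by_contra! h
  have hmem : ∀ x, inc0 x l → x = u ∨ x = v := fun x hx => by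
    by_contra! h'
    exact h x h'.1 h'.2 hx
  grind [hmem a ha, hmem b hb, hmem c hc]

lemma Shultenian.exists_collinear_of_triangle (hShult : Shultenian inc0)
    (hline : ∀ (l : L) (u v : S), ∃ x, x ≠ u ∧ x ≠ v ∧ inc0 x l)
    {a b c : S} {w : L} (habc : IsTriangle inc0 a b c) (hb : inc0 b w) (hc : inc0 c w) :
    ∃ d m, d ≠ b ∧ d ≠ c ∧ inc0 d w ∧ inc0 a m ∧ inc0 d m := by
  obtain ⟨hab, hbc, hac, ⟨x, hax, hbx⟩, hcollbc, ⟨y, hay, hcy⟩, hno⟩ := habc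
  obtain ⟨d, hdb, hdc, hdw⟩ := hline w b c
  have hbca : IsTriangle inc0 b c a :=
    ⟨hbc, hac.symm, hab.symm, hcollbc, ⟨y, hcy, hay⟩, ⟨x, hbx, hax⟩,
      fun ⟨t, hbt, hct, hat⟩ => hno ⟨t, hat, hbt, hct⟩⟩
  obtain ⟨m, hdm, ham⟩ := hShult b c a d w hbca hb hc hdw
  exact ⟨d, m, hdb, hdc, hdw, ham, hdm⟩

lemma exists_line_meeting_two_lines_through (hPLS : IsPLS inc0) (hShult : Shultenian inc0)
    (hline : ∀ (l : L) (u v : S), ∃ x, x ≠ u ∧ x ≠ v ∧ inc0 x l)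
    (htri : ∀ a b : S, a ≠ b → Collin inc0 a b → ∃ c, IsTriangle inc0 a b c)
    {a b : S} {y : L} (hab : a ≠ b) (ha : inc0 a y) (hb : inc0 b y) :
    ∃ w m n, w ≠ y ∧ m ≠ y ∧ n ≠ y ∧ m ≠ n ∧ inc0 b w ∧ inc0 a m ∧ inc0 a n ∧
      (∃ c, inc0 c w ∧ inc0 c m) ∧ ∃ d, inc0 d w ∧ inc0 d n := by
  obtain ⟨c, habc⟩ := htri a b hab ⟨y, ha, hb⟩
  have ⟨_, _, _, _, ⟨w, hbw, hcw⟩, ⟨m, ham, hcm⟩, hno⟩ := habc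
  obtain ⟨d, n, hdb, hdc, hdw, han, hdn⟩ :=
    hShult.exists_collinear_of_triangle hline habc hbw hcw
  have hwy : w ≠ y := by
    rintro rfl
    exact hno ⟨w, ha, hbw, hcw⟩
  refine ⟨w, m, n, hwy, ?_, ?_, ?_, hbw, ham, han, ⟨c, hcw, hcm⟩, d, hdw, hdn⟩
  · rintro rfl
    exact hno ⟨m, ham, hb, hcm⟩
  · rintro rfl
    exact (hPLS.2.2 d b n w hdn hb hdw hbw).elim hdb (hwy ∘ Eq.symm)
  · rintro rfl
    exact (hPLS.2.2 c d m w hcm hdn hcw hdw).elim (hdc ∘ Eq.symm)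
      fun h => hno ⟨w, h ▸ ham, hbw, hcw⟩

lemma exists_point_collinear_with_two_points_on (hPLS : IsPLS inc0) (hShult : Shultenian inc0)
    (hline : ∀ (l : L) (u v : S), ∃ x, x ≠ u ∧ x ≠ v ∧ inc0 x l)
    (htriLn : ∀ l m : L, l ≠ m → (∃ p, inc0 p l ∧ inc0 p m) → ∃ n, IsTriangle (flip inc0) l m n)
    {s : S} {w z : L} (hwz : w ≠ z) (hsw : inc0 s w) (hsz : inc0 s z) :
    ∃ c b₁ b₂, c ≠ s ∧ b₁ ≠ s ∧ b₂ ≠ s ∧ b₁ ≠ b₂ ∧ inc0 c z ∧ inc0 b₁ w ∧ inc0 b₂ w ∧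
      (∃ t, inc0 c t ∧ inc0 b₁ t) ∧ ∃ u, inc0 c u ∧ inc0 b₂ u := by
  obtain ⟨t, -, -, -, -, ⟨c, hcz, hct⟩, ⟨b₁, hb₁w, hb₁t⟩, hno⟩ := htriLn w z hwz ⟨s, hsw, hsz⟩
  have hcs : c ≠ s := by
    rintro rfl
    exact hno ⟨c, hsw, hcz, hct⟩
  have hb₁s : b₁ ≠ s := by
    rintro rfl
    exact hno ⟨b₁, hb₁w, hsz, hb₁t⟩
  have hcw : ¬ inc0 c w := fun h => (hPLS.2.2 c s w z h hsw hcz hsz).elim hcs hwz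
  have hcb₁s : IsTriangle inc0 c b₁ s := by
    refine ⟨fun h => hcw (h ▸ hb₁w), hb₁s, hcs, ⟨t, hct, hb₁t⟩, ⟨w, hb₁w, hsw⟩, ⟨z, hcz, hsz⟩, ?_⟩
    rintro ⟨t', hct', hb₁t', hst'⟩
    exact (hPLS.2.2 b₁ s t' w hb₁t' hst' hb₁w hsw).elim hb₁s fun h => hcw (h ▸ hct')
  obtain ⟨b₂, u, hb₂b₁, hb₂s, hb₂w, hcu, hb₂u⟩ :=
    hShult.exists_collinear_of_triangle hline hcb₁s hb₁w hsw
  exact ⟨c, b₁, b₂, hcs, hb₁s, hb₂s, hb₂b₁.symm, hcz, hb₁w, hb₂w, ⟨t, hct, hb₁t⟩, u, hcu, hb₂u⟩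

end IncidenceStructure

section DualInc

variable {S L : Type*} {inc0 : S → L → Prop}

lemma dualInc_comm {x y : S ⊕ L} : dualInc inc0 x y ↔ dualInc inc0 y x := by
  cases x <;> cases y <;> rfl

lemma dualInc.ne {x y : S ⊕ L} (h : dualInc inc0 x y) : x ≠ y := by
  rintro rfl
  cases x <;> exact h

lemma dualInc_eq_or_eq (hPLS : IsPLS inc0) {x x' y y' : S ⊕ L} (hxy : dualInc inc0 x y)
    (hxy' : dualInc inc0 x y') (hx'y : dualInc inc0 x' y) (hx'y' : dualInc inc0 x' y') :
    x = x' ∨ y = y' := by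
  rcases x with a | l <;> rcases y with b | m <;> rcases x' with a' | l' <;>
    rcases y' with b' | m' <;> simp only [dualInc] at * <;> simp only [Sum.inl.injEq, Sum.inr.injEq]
  · exact hPLS.2.2 a a' m m' hxy hx'y hxy' hx'y'
  · exact (hPLS.2.2 b b' l l' hxy hxy' hx'y hx'y').symm

lemma exists_two_dualInc (hPLS : IsPLS inc0) (y : S ⊕ L) :
    ∃ x x', x ≠ x' ∧ dualInc inc0 x y ∧ dualInc inc0 x' y := by
  rcases y with a | l
  · obtain ⟨l, m, hlm, hl, hm⟩ := hPLS.2.1 a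
    exact ⟨.inr l, .inr m, Sum.inr_injective.ne hlm, hl, hm⟩
  · obtain ⟨a, b, hab, ha, hb⟩ := hPLS.1 l
    exact ⟨.inl a, .inl b, Sum.inl_injective.ne hab, ha, hb⟩

lemma exists_dualInc_ne (hPLS : IsPLS inc0) (x y : S ⊕ L) :
    ∃ x', x' ≠ x ∧ dualInc inc0 x' y := by
  obtain ⟨z, z', hzz', hz, hz'⟩ := exists_two_dualInc hPLS y
  by_cases hzx : z = x
  · exact ⟨z', fun h => hzz' (hzx.trans h.symm), hz'⟩
  · exact ⟨z, hzx, hz⟩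

/-- On one level of `⊛_G(∘, M₀)`: a line `k` through `x'` meeting two lines `m`, `n` through `x`. -/
lemma exists_dualInc_transversal (hPLS : IsPLS inc0) (hShult : Shultenian inc0)
    (hline : ∀ (l : L) (u v : S), ∃ x, x ≠ u ∧ x ≠ v ∧ inc0 x l)
    (htri : ∀ a b : S, a ≠ b → Collin inc0 a b → ∃ c, IsTriangle inc0 a b c)
    (htriLn : ∀ l m : L, l ≠ m → (∃ p, inc0 p l ∧ inc0 p m) → ∃ n, IsTriangle (flip inc0) l m n)
    {x x' y : S ⊕ L} (hxx' : x ≠ x') (hxy : dualInc inc0 x y) (hx'y : dualInc inc0 x' y) :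
    ∃ k m n, k ≠ y ∧ m ≠ y ∧ n ≠ y ∧ m ≠ n ∧
      dualInc inc0 x' k ∧ dualInc inc0 x m ∧ dualInc inc0 x n ∧
      (∃ u, dualInc inc0 u k ∧ dualInc inc0 u m) ∧ ∃ v, dualInc inc0 v k ∧ dualInc inc0 v n := by
  rcases x with a | w <;> rcases x' with b | z <;> rcases y with s | y <;>
    first | exact hxy.elim | exact hx'y.elim | skip
  · obtain ⟨k, m, n, hky, hmy, hny, hmn, hbk, ham, han, ⟨c, hck, hcm⟩, d, hdk, hdn⟩ :=
      exists_line_meeting_two_lines_through hPLS hShult hline htri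
        (Sum.inl_injective.ne_iff.1 hxx') hxy hx'y
    exact ⟨.inr k, .inr m, .inr n, Sum.inr_injective.ne hky, Sum.inr_injective.ne hmy,
      Sum.inr_injective.ne hny, Sum.inr_injective.ne hmn, hbk, ham, han, ⟨.inl c, hck, hcm⟩,
      .inl d, hdk, hdn⟩
  · obtain ⟨c, b₁, b₂, hcs, hb₁s, hb₂s, hb₁b₂, hcz, hb₁w, hb₂w, ⟨t, hct, hb₁t⟩, u, hcu, hb₂u⟩ :=
      exists_point_collinear_with_two_points_on hPLS hShult hline htriLn
        (Sum.inr_injective.ne_iff.1 hxx') hxy hx'y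
    exact ⟨.inl c, .inl b₁, .inl b₂, Sum.inl_injective.ne hcs, Sum.inl_injective.ne hb₁s,
      Sum.inl_injective.ne hb₂s, Sum.inl_injective.ne hb₁b₂, hcz, hb₁w, hb₂w, ⟨.inr t, hct, hb₁t⟩,
      .inr u, hcu, hb₂u⟩

end DualInc

section Star

variable {G : Type*} [CommRing G] {S L : Type*} {inc0 : S → L → Prop}

lemma mem_starLn_of_dualInc {i : G} {x y : S ⊕ L} (hx : (i, x) ∈ starPt G S L)
    (hxy : dualInc inc0 x y) : (i, y) ∈ starLn G S L := by
  rcases x with a | l <;> rcases y with b | m <;> simp_all [starPt, starLn, dualInc]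

lemma mem_starPt_of_dualInc {i : G} {x y : S ⊕ L} (hy : (i, y) ∈ starLn G S L)
    (hxy : dualInc inc0 x y) : (i, x) ∈ starPt G S L := by
  rcases x with a | l <;> rcases y with b | m <;> simp_all [starPt, starLn, dualInc]

lemma level_eq_of_starInc_tip {j : G} {y : S ⊕ L} {hp : (j + 1, y) ∈ starPt G S L}
    {hl : (j, y) ∈ starLn G S L} {m : starLn G S L} (hlm : ⟨(j, y), hl⟩ ≠ m)
    (hpm : starInc G inc0 ⟨(j + 1, y), hp⟩ m) : m.val.1 = j + 1 ∧ dualInc inc0 y m.val.2 := by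
  obtain ⟨⟨i, c⟩, hm⟩ := m
  rcases hpm with h | ⟨hji, rfl⟩
  · exact ⟨h.1.symm, h.2⟩
  · obtain rfl : j = i := add_right_cancel hji
    exact (hlm rfl).elim

lemma level_eq_of_meets (h1 : (1 : G) ≠ 0) (h2 : (2 : G) ≠ 0) (h3 : (3 : G) ≠ 0)
    {j : G} {q : starPt G S L} {k m : starLn G S L} (hq : q.val.1 = j) (hqk : starInc G inc0 q k)
    (hm : m.val.1 = j + 1) (hkm : ∃ r, starInc G inc0 r k ∧ starInc G inc0 r m) :
    k.val.1 = j ∧ dualInc inc0 k.val.2 m.val.2 := by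
  obtain ⟨r, hrk, hrm⟩ := hkm
  -- `r.1 - j` is `1` or `2` since `r` is on `m`, and `-1`, `0` or `1` since `q` and `r` are on `k`.
  rcases hqk with ⟨hqk, -⟩ | ⟨hqk, -⟩ <;> rcases hrk with ⟨hrk, hv⟩ | ⟨hrk, hv⟩ <;>
    rcases hrm with ⟨hrm, hv'⟩ | ⟨hrm, hv'⟩
  all_goals first
    | exact ⟨hqk.symm.trans hq, hv ▸ hv'⟩
    | exact (h1 (by linear_combination hrk - hrm - hqk + hq - hm)).elim
    | exact (h2 (by linear_combination hrk - hrm - hqk + hq - hm)).elim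
    | exact (h3 (by linear_combination hrk - hrm - hqk + hq - hm)).elim

lemma dod1_of_starDod (hPLS : IsPLS inc0) (h1 : (1 : G) ≠ 0) (h2 : (2 : G) ≠ 0)
    (h3 : (3 : G) ≠ 0) {p : starPt G S L} {l : starLn G S L} (h : starDod G inc0 p l) :
    dod1 (starInc G inc0) p l := by
  obtain ⟨⟨i, x⟩, hp⟩ := p
  obtain ⟨⟨j, y⟩, hl⟩ := l
  obtain ⟨hpl, rfl⟩ := h
  obtain rfl : x = y := (hpl.resolve_left fun h => h1 (by linear_combination h.1)).2
  obtain ⟨z, -, -, hzx, -⟩ := exists_two_dualInc hPLS x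
  refine ⟨hpl, ⟨(j, z), mem_starPt_of_dualInc hl hzx⟩,
    fun h => h1 (by linear_combination -congrArg (·.val.1) h), Or.inl ⟨rfl, hzx⟩, ?_⟩
  intro k m n hlk hlm hln hmn hqk hpm hpn hkm hkn
  obtain ⟨hm, hxm⟩ := level_eq_of_starInc_tip hlm hpm
  obtain ⟨hn, hxn⟩ := level_eq_of_starInc_tip hln hpn
  obtain ⟨hk, hkm⟩ := level_eq_of_meets h1 h2 h3 rfl hqk hm hkm
  obtain ⟨-, hkn⟩ := level_eq_of_meets h1 h2 h3 rfl hqk hn hkn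
  rcases dualInc_eq_or_eq hPLS hkm hkn hxm hxn with hkx | hmn'
  · exact hlk (Subtype.ext (Prod.ext hk.symm hkx.symm))
  · exact hmn (Subtype.ext (Prod.ext (hm.trans hn.symm) hmn'))

lemma not_dod1_of_dualInc (hPLS : IsPLS inc0) (hShult : Shultenian inc0)
    (hline : ∀ (l : L) (u v : S), ∃ x, x ≠ u ∧ x ≠ v ∧ inc0 x l)
    (htri : ∀ a b : S, a ≠ b → Collin inc0 a b → ∃ c, IsTriangle inc0 a b c)
    (htriLn : ∀ l m : L, l ≠ m → (∃ p, inc0 p l ∧ inc0 p m) → ∃ n, IsTriangle (flip inc0) l m n)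
    {j : G} {x y : S ⊕ L} {hp : (j, x) ∈ starPt G S L} {hl : (j, y) ∈ starLn G S L}
    (hxy : dualInc inc0 x y) : ¬ dod1 (starInc G inc0) ⟨(j, x), hp⟩ ⟨(j, y), hl⟩ := by
  rintro ⟨-, ⟨⟨i, x'⟩, hq⟩, hqp, hql, hfar⟩
  rcases hql with ⟨rfl, hx'y⟩ | ⟨rfl, hx'y⟩
  · have hxx' : x ≠ x' := by
      rintro rfl
      exact hqp rfl
    obtain ⟨k, m, n, hky, hmy, hny, hmn, hx'k, hxm, hxn, ⟨u, huk, hum⟩, v, hvk, hvn⟩ :=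
      exists_dualInc_transversal hPLS hShult hline htri htriLn hxx' hxy hx'y
    have hk := mem_starLn_of_dualInc hq hx'k
    exact hfar ⟨(_, k), hk⟩ ⟨(_, m), mem_starLn_of_dualInc hp hxm⟩
      ⟨(_, n), mem_starLn_of_dualInc hp hxn⟩ (ne_of_apply_ne (·.val.2) hky.symm)
      (ne_of_apply_ne (·.val.2) hmy.symm) (ne_of_apply_ne (·.val.2) hny.symm)
      (ne_of_apply_ne (·.val.2) hmn) (Or.inl ⟨rfl, hx'k⟩) (Or.inl ⟨rfl, hxm⟩) (Or.inl ⟨rfl, hxn⟩)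
      ⟨⟨(_, u), mem_starPt_of_dualInc hk huk⟩, Or.inl ⟨rfl, huk⟩, Or.inl ⟨rfl, hum⟩⟩
      ⟨⟨(_, v), mem_starPt_of_dualInc hk hvk⟩, Or.inl ⟨rfl, hvk⟩, Or.inl ⟨rfl, hvn⟩⟩
  · obtain rfl : y = x' := hx'y.symm
    obtain ⟨z, hzx, hzy⟩ := exists_dualInc_ne hPLS x y
    obtain ⟨-, m, n, -, hmy, hny, hmn, -, hxm, hxn, -⟩ :=
      exists_dualInc_transversal hPLS hShult hline htri htriLn hzx.symm hxy hzy
    have hk := mem_starLn_of_dualInc hq (dualInc_comm.1 hxy)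
    exact hfar ⟨(_, x), hk⟩ ⟨(j, m), mem_starLn_of_dualInc hp hxm⟩
      ⟨(j, n), mem_starLn_of_dualInc hp hxn⟩ (ne_of_apply_ne (·.val.2) hxy.ne.symm)
      (ne_of_apply_ne (·.val.2) hmy.symm) (ne_of_apply_ne (·.val.2) hny.symm)
      (ne_of_apply_ne (·.val.2) hmn) (Or.inl ⟨rfl, dualInc_comm.1 hxy⟩) (Or.inl ⟨rfl, hxm⟩)
      (Or.inl ⟨rfl, hxn⟩)
      ⟨⟨(_, m), mem_starPt_of_dualInc hk (dualInc_comm.1 hxm)⟩, Or.inl ⟨rfl, dualInc_comm.1 hxm⟩,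
        Or.inr ⟨rfl, rfl⟩⟩
      ⟨⟨(_, n), mem_starPt_of_dualInc hk (dualInc_comm.1 hxn)⟩, Or.inl ⟨rfl, dualInc_comm.1 hxn⟩,
        Or.inr ⟨rfl, rfl⟩⟩

end Star

lemma GoodGroup.natCast_ne_zero {G : Type*} [CommRing G] (hG : GoodGroup G) {n : ℕ} (hn0 : n ≠ 0)
    (hn4 : n < 4) : (n : G) ≠ 0 := by
  rcases hG with ⟨⟨f⟩⟩ | ⟨k, hk, ⟨r, rfl⟩, ⟨f⟩⟩
  · rw [← f.map_ne_zero_iff, map_natCast]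
    exact_mod_cast hn0
  · rw [← f.map_ne_zero_iff, map_natCast, Ne, ZMod.natCast_eq_zero_iff]
    intro hdvd
    have := Nat.le_of_dvd (Nat.pos_of_ne_zero hn0) hdvd
    omega

/-- if `M₀` is Shultenian, has no 2-element lines, any two collinear
points extend to a triangle, and any two intersecting lines extend to a triangle of
lines, then in `⊛_G(∘, M₀)` the relations `⊹₁` and `⊹` coincide. -/
theorem star_dod1_iff_dod {G : Type} [CommRing G] (hG : GoodGroup G)
    {S L : Type} (inc0 : S → L → Prop) (hPLS : IsPLS inc0)
    (hShult : Shultenian inc0)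
    (hno2 : ∀ l : L, ∃ a b c : S, a ≠ b ∧ a ≠ c ∧ b ≠ c ∧
      inc0 a l ∧ inc0 b l ∧ inc0 c l)
    (htri : ∀ a b : S, a ≠ b → Collin inc0 a b → ∃ c, IsTriangle inc0 a b c)
    (htriLn : ∀ l m : L, l ≠ m → (∃ p, inc0 p l ∧ inc0 p m) →
      ∃ n, IsTriangle (fun (x : L) (p : S) => inc0 p x) l m n) :
    ∀ (p : ↥(starPt G S L)) (l : ↥(starLn G S L)),
      dod1 (starInc G inc0) p l ↔ starDod G inc0 p l := by
  have h1 : (1 : G) ≠ 0 := by exact_mod_cast hG.natCast_ne_zero one_ne_zero (by norm_num)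
  have h2 : (2 : G) ≠ 0 := by exact_mod_cast hG.natCast_ne_zero two_ne_zero (by norm_num)
  have h3 : (3 : G) ≠ 0 := by exact_mod_cast hG.natCast_ne_zero three_ne_zero (by norm_num)
  rintro ⟨⟨i, x⟩, hp⟩ ⟨⟨j, y⟩, hl⟩
  refine ⟨fun h => ⟨h.1, ?_⟩, dod1_of_starDod hPLS h1 h2 h3⟩
  rcases h.1 with ⟨rfl, hxy⟩ | ⟨hij, -⟩
  · exact absurd h (not_dod1_of_dualInc hPLS hShult (exists_inc_ne_ne hno2) htri htriLn hxy)
  · exact hij
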